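/- arXiv:2512.15007 — 4 statements merged into one kernel-verified Lean document; each statement's English description precedes it below -/
import Mathlib

section
/- For any base b ≥ 2 and any m ≥ 0, the number a_{b,2}(m) of admissible patterns of non-empty sub-cubes for (0,m,2)-nets in base b satisfies the recursion a_{b,2}(m) = (a_{b,2}(m-1))^b · (b!)^{b^{m-1}} for m ≥ 1, with a_{b,2}(0) = 1, and hence a_{b,2}(m) = (b!)^{m·b^{m-1}}. -/
open Finset

/-- `P` is a `(0,m,d)`-net in base `b`: a set of `b^m` points of `[0,1)^d` such that
every elementary interval of volume `b^{-m}` contains exactly one point of `P`. -/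
def IsNet (b m d : ℕ) (P : Finset (Fin d → ℝ)) : Prop :=
  P.card = b ^ m ∧
  (∀ x ∈ P, ∀ j, x j ∈ Set.Ico (0 : ℝ) 1) ∧
  ∀ c : Fin d → ℕ, (∑ j, c j) = m →
    ∀ a : Fin d → ℕ, (∀ j, a j < b ^ c j) →
      ∃! x, x ∈ P ∧ ∀ j, (a j : ℝ) / (b : ℝ) ^ c j ≤ x j ∧ x j < ((a j : ℝ) + 1) / (b : ℝ) ^ c j

/-- The index of the sub-cube of side `b^{-m}` containing the point `x`. -/
noncomputable def cubeIdx (b m d : ℕ) (x : Fin d → ℝ) : Fin d → ℕ :=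
  fun j => (⌊(b : ℝ) ^ m * x j⌋).toNat

/-- A pattern `S` of sub-cubes (of side `b^{-m}`) is admissible if some `(0,m,d)`-net in
base `b` has exactly one point in each sub-cube of `S` and no point elsewhere. -/
def Admissible (b m d : ℕ) (S : Finset (Fin d → ℕ)) : Prop :=
  ∃ P : Finset (Fin d → ℝ), IsNet b m d P ∧ S = P.image (cubeIdx b m d) ∧ S.card = b ^ m

/-- `a_{b,d}(m)`: the number of admissible patterns. -/
noncomputable def patternCount (b d m : ℕ) : ℕ := Set.ncard {S | Admissible b m d S}

/-!
Scaling by `b ^ m` turns an admissible pattern into a set of integer cells in `[0, b ^ m) ^ 2`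
meeting every elementary box in exactly one cell, and the lower-left corners of such cells form a
net. Write the cells of level `m + 1` as `(a b ^ m + x, y b + s)` with digits `a, s < b`. The cells
with leading digit `a`, stripped of `a` and `s`, form a pattern of level `m`. The horizontal strip
`y = q` of height `b ^ (-m)` contains exactly one cell in each vertical strip `a` of width `1 / b`
and one in each of its `b` rows `s`, so `a ↦ s` is a permutation. Conversely any `b` patterns of
level `m` and `b ^ m` permutations glue to a pattern of level `m + 1`, and the two constructions are
mutually inverse.
-/

theorem Finset.existsUnique_mem_image_iff {α β : Type*} [DecidableEq β] {f : α → β}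
    {s : Finset α} (hf : Set.InjOn f s) (p : β → Prop) :
    (∃! y, y ∈ s.image f ∧ p y) ↔ ∃! x, x ∈ s ∧ p (f x) := by
  constructor
  · rintro ⟨_, ⟨hy, hpy⟩, huniq⟩
    obtain ⟨x, hx, rfl⟩ := mem_image.1 hy
    exact ⟨x, ⟨hx, hpy⟩, fun x' ⟨hx', hpx'⟩ ↦ hf hx' hx (huniq _ ⟨mem_image_of_mem f hx', hpx'⟩)⟩
  · rintro ⟨x, ⟨hx, hpx⟩, huniq⟩
    refine ⟨f x, ⟨mem_image_of_mem f hx, hpx⟩, ?_⟩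
    rintro _ ⟨hy, hpy⟩
    obtain ⟨x', hx', rfl⟩ := mem_image.1 hy
    exact congrArg f (huniq _ ⟨hx', hpy⟩)

theorem existsUnique_and_congr {α : Type*} {p q r : α → Prop} (h : ∀ x, p x → (q x ↔ r x)) :
    (∃! x, p x ∧ q x) ↔ ∃! x, p x ∧ r x :=
  existsUnique_congr fun x ↦
    ⟨fun ⟨hp, hq⟩ ↦ ⟨hp, (h x hp).1 hq⟩, fun ⟨hp, hr⟩ ↦ ⟨hp, (h x hp).2 hr⟩⟩

theorem Nat.add_mul_pow_div_pow {b m d : ℕ} (hb : 0 < b) (hd : d ≤ m) (a t : ℕ) :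
    (a * b ^ m + t) / b ^ (m - d) = a * b ^ d + t / b ^ (m - d) := by
  have hsplit : a * b ^ m = a * b ^ d * b ^ (m - d) := by
    rw [mul_assoc, ← pow_add, Nat.add_sub_cancel' hd]
  rw [hsplit, add_comm, Nat.add_mul_div_right _ _ (by positivity), add_comm]

theorem Nat.eq_and_eq_of_mul_add_eq_mul_add {B a r a' r' : ℕ} (hr : r < B) (hr' : r' < B)
    (h : a * B + r = a' * B + r') : a = a' ∧ r = r' := by
  have hB : 0 < B := by omega
  obtain ⟨hdiv, hmod⟩ :=
    (Nat.div_mod_unique (a := a' * B + r') (d := a) (c := r) hB).2 ⟨by rw [← h]; ring, hr⟩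
  obtain ⟨hdiv', hmod'⟩ :=
    (Nat.div_mod_unique (a := a' * B + r') (d := a') (c := r') hB).2 ⟨by ring, hr'⟩
  exact ⟨hdiv.symm.trans hdiv', hmod.symm.trans hmod'⟩

/-- The cell `k` is `∏ j, [k j / b ^ m, (k j + 1) / b ^ m)`, and `(c, a)` indexes the elementary
interval `∏ j, [a j / b ^ c j, (a j + 1) / b ^ c j)`. -/
def IsNetPattern (b m d : ℕ) (S : Finset (Fin d → ℕ)) : Prop :=
  (∀ k ∈ S, ∀ j, k j < b ^ m) ∧
  ∀ c : Fin d → ℕ, ∑ j, c j = m → ∀ a : Fin d → ℕ, (∀ j, a j < b ^ c j) →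
    ∃! k, k ∈ S ∧ ∀ j, k j / b ^ (m - c j) = a j

theorem cubeIdx_apply (b m d : ℕ) (x : Fin d → ℝ) (j : Fin d) :
    cubeIdx b m d x j = ⌊(b : ℝ) ^ m * x j⌋₊ :=
  Int.floor_toNat _

theorem mem_elementaryInterval_iff {b m c a : ℕ} (hb : 0 < b) (hc : c ≤ m) {x : ℝ} (hx : 0 ≤ x) :
    ((a : ℝ) / (b : ℝ) ^ c ≤ x ∧ x < ((a : ℝ) + 1) / (b : ℝ) ^ c) ↔
      ⌊(b : ℝ) ^ m * x⌋₊ / b ^ (m - c) = a := by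
  have hbc : (0 : ℝ) < (b : ℝ) ^ c := by positivity
  have hscale : (b : ℝ) ^ m * x / ((b ^ (m - c) : ℕ) : ℝ) = (b : ℝ) ^ c * x := by
    rw [Nat.cast_pow, ← Nat.sub_add_cancel hc, pow_add, Nat.add_sub_cancel]
    field_simp
  rw [← Nat.floor_div_natCast, hscale, Nat.floor_eq_iff (by positivity), div_le_iff₀ hbc,
    lt_div_iff₀ hbc, mul_comm x]

theorem isNetPattern_image_iff {b m d : ℕ} (hb : 0 < b) {P : Finset (Fin d → ℝ)}
    (hP : ∀ x ∈ P, ∀ j, x j ∈ Set.Ico (0 : ℝ) 1) (hinj : Set.InjOn (cubeIdx b m d) P) :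
    IsNetPattern b m d (P.image (cubeIdx b m d)) ↔ ∀ c : Fin d → ℕ, ∑ j, c j = m →
      ∀ a : Fin d → ℕ, (∀ j, a j < b ^ c j) →
        ∃! x, x ∈ P ∧
          ∀ j, (a j : ℝ) / (b : ℝ) ^ c j ≤ x j ∧ x j < ((a j : ℝ) + 1) / (b : ℝ) ^ c j := by
  have hbound : ∀ k ∈ P.image (cubeIdx b m d), ∀ j, k j < b ^ m := by
    intro k hk j
    obtain ⟨x, hx, rfl⟩ := mem_image.1 hk
    obtain ⟨hx0, hx1⟩ := hP x hx j
    rw [cubeIdx_apply, Nat.floor_lt (by positivity), Nat.cast_pow]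
    exact mul_lt_of_lt_one_right (by positivity) hx1
  rw [IsNetPattern, and_iff_right hbound]
  simp only [Finset.existsUnique_mem_image_iff hinj]
  refine forall₂_congr fun c hc ↦ forall₂_congr fun a _ ↦ (existsUnique_and_congr ?_).symm
  intro x hx
  refine forall_congr' fun j ↦ ?_
  have hcj : c j ≤ m := hc ▸ Finset.single_le_sum (by simp) (mem_univ j)
  rw [cubeIdx_apply, mem_elementaryInterval_iff hb hcj (hP x hx j).1]

theorem IsNetPattern.existsUnique_apply_eq {b m d : ℕ} {S : Finset (Fin d → ℕ)}
    (hS : IsNetPattern b m d S) (j₀ : Fin d) {t : ℕ} (ht : t < b ^ m) :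
    ∃! k, k ∈ S ∧ k j₀ = t := by
  refine (existsUnique_and_congr fun k hk ↦ ?_).1
    (hS.2 (Pi.single j₀ m) (by simp) (Pi.single j₀ t) fun j ↦ ?_)
  · refine ⟨fun h ↦ by simpa using h j₀, fun h j ↦ ?_⟩
    rcases eq_or_ne j j₀ with rfl | hj
    · simpa using h
    · simp [hj, Nat.div_eq_of_lt (hS.1 k hk j)]
  · rcases eq_or_ne j j₀ with rfl | hj
    · simpa using ht
    · simp [hj]

theorem IsNetPattern.card_eq {b m d : ℕ} {S : Finset (Fin d → ℕ)} (hS : IsNetPattern b m d S)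
    (j₀ : Fin d) : S.card = b ^ m := by
  rw [← card_range (b ^ m)]
  refine card_bij (fun k _ ↦ k j₀) (fun k hk ↦ mem_range.2 (hS.1 k hk j₀)) ?_ ?_
  · intro k hk k' hk' h
    exact (hS.existsUnique_apply_eq j₀ (hS.1 k hk j₀)).unique ⟨hk, rfl⟩ ⟨hk', h.symm⟩
  · intro t ht
    obtain ⟨k, ⟨hk, rfl⟩, -⟩ := hS.existsUnique_apply_eq j₀ (mem_range.1 ht)
    exact ⟨k, hk, rfl⟩

theorem admissible_iff_isNetPattern {b m d : ℕ} [NeZero d] (hb : 0 < b) (S : Finset (Fin d → ℕ)) :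
    Admissible b m d S ↔ IsNetPattern b m d S := by
  constructor
  · rintro ⟨P, ⟨hcard, hP, hbox⟩, rfl, hScard⟩
    exact (isNetPattern_image_iff hb hP (injOn_of_card_image_eq (hScard.trans hcard.symm))).2 hbox
  · intro hS
    let corner : (Fin d → ℕ) → Fin d → ℝ := fun k j ↦ (k j : ℝ) / (b : ℝ) ^ m
    have hbm : (0 : ℝ) < (b : ℝ) ^ m := by positivity
    have hcube : ∀ k, cubeIdx b m d (corner k) = k := fun k ↦ funext fun j ↦ by
      simp [cubeIdx_apply, corner, mul_div_cancel₀ _ hbm.ne']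
    have hSP : S = (S.image corner).image (cubeIdx b m d) := by
      simp [image_image, Function.comp_def, hcube]
    have hinj : Set.InjOn (cubeIdx b m d) (S.image corner) := by
      rintro _ hx _ hx' h
      obtain ⟨k, -, rfl⟩ := mem_image.1 hx
      obtain ⟨k', -, rfl⟩ := mem_image.1 hx'
      rw [hcube, hcube] at h
      rw [h]
    have hP : ∀ x ∈ S.image corner, ∀ j, x j ∈ Set.Ico (0 : ℝ) 1 := by
      rintro _ hx j
      obtain ⟨k, hk, rfl⟩ := mem_image.1 hx
      exact ⟨by positivity, (div_lt_one hbm).2 (by exact_mod_cast hS.1 k hk j)⟩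
    have hScard := hS.card_eq 0
    refine ⟨S.image corner, ⟨?_, hP, ?_⟩, hSP, hScard⟩
    · rw [← card_image_of_injOn hinj, ← hSP, hScard]
    · exact (isNetPattern_image_iff hb hP hinj).1 (hSP ▸ hS)

theorem patternCount_eq_card {b d : ℕ} [NeZero d] (hb : 0 < b) (m : ℕ) :
    patternCount b d m = Nat.card {S // IsNetPattern b m d S} :=
  Nat.card_congr (Equiv.subtypeEquivRight fun S ↦ admissible_iff_isNetPattern hb S)

theorem isNetPattern_zero_iff {b d : ℕ} {S : Finset (Fin d → ℕ)} :
    IsNetPattern b 0 d S ↔ S = {0} := by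
  constructor
  · rintro ⟨hbound, hbox⟩
    have hzero : ∀ k ∈ S, k = 0 := fun k hk ↦ funext fun j ↦ by simpa using hbound k hk j
    obtain ⟨k, ⟨hk, -⟩, -⟩ := hbox 0 (by simp) 0 (by simp)
    exact eq_singleton_iff_unique_mem.2 ⟨hzero k hk ▸ hk, hzero⟩
  · rintro rfl
    refine ⟨by simp, fun c hc a ha ↦ ⟨0, ⟨mem_singleton_self 0, fun j ↦ ?_⟩, by simp⟩⟩
    have hcj : c j = 0 := (Finset.sum_eq_zero_iff.1 hc) j (mem_univ j)
    simpa [hcj, eq_comm] using ha j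

theorem isNetPattern_two_iff {b m : ℕ} {S : Finset (Fin 2 → ℕ)} :
    IsNetPattern b m 2 S ↔ (∀ k ∈ S, ∀ j, k j < b ^ m) ∧
      ∀ c₀ c₁, c₀ + c₁ = m → ∀ a₀ a₁, a₀ < b ^ c₀ → a₁ < b ^ c₁ →
        ∃! k, k ∈ S ∧ k 0 / b ^ (m - c₀) = a₀ ∧ k 1 / b ^ (m - c₁) = a₁ := by
  refine and_congr_right fun _ ↦ ⟨fun h c₀ c₁ hc a₀ a₁ h₀ h₁ ↦ ?_, fun h c hc a ha ↦ ?_⟩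
  · simpa [Fin.forall_fin_two] using
      h ![c₀, c₁] (by simpa using hc) ![a₀, a₁] (Fin.forall_fin_two.2 ⟨h₀, h₁⟩)
  · simpa [Fin.forall_fin_two] using
      h (c 0) (c 1) (by simpa [Fin.sum_univ_two] using hc) (a 0) (a 1) (ha 0) (ha 1)

section Cells

variable (b m : ℕ)

/-- `a` becomes the leading base-`b` digit of the first coordinate, `s` the last digit of the
second. -/
def liftCell (a : ℕ) (t : Fin 2 → ℕ) (s : ℕ) : Fin 2 → ℕ := ![a * b ^ m + t 0, t 1 * b + s]

def lowerCell (k : Fin 2 → ℕ) : Fin 2 → ℕ := ![k 0 % b ^ m, k 1 / b]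

variable {b m}

@[simp] theorem liftCell_zero (a : ℕ) (t : Fin 2 → ℕ) (s : ℕ) :
    liftCell b m a t s 0 = a * b ^ m + t 0 := rfl

@[simp] theorem liftCell_one (a : ℕ) (t : Fin 2 → ℕ) (s : ℕ) :
    liftCell b m a t s 1 = t 1 * b + s := rfl

theorem liftCell_lowerCell (k : Fin 2 → ℕ) :
    liftCell b m (k 0 / b ^ m) (lowerCell b m k) (k 1 % b) = k := by
  ext j
  fin_cases j
  · exact Nat.div_add_mod' _ _
  · exact Nat.div_add_mod' _ _

theorem eq_of_liftCell_eq {a a' s s' : ℕ} {t t' : Fin 2 → ℕ} (ht : t 0 < b ^ m)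
    (ht' : t' 0 < b ^ m) (hs : s < b) (hs' : s' < b)
    (h : liftCell b m a t s = liftCell b m a' t' s') : a = a' ∧ t = t' ∧ s = s' := by
  obtain ⟨ha, h₀⟩ := Nat.eq_and_eq_of_mul_add_eq_mul_add ht ht' (congrFun h 0)
  obtain ⟨h₁, hs⟩ := Nat.eq_and_eq_of_mul_add_eq_mul_add hs hs' (congrFun h 1)
  exact ⟨ha, funext (Fin.forall_fin_two.2 ⟨h₀, h₁⟩), hs⟩

theorem liftCell_one_eq_iff {a s y : ℕ} {t : Fin 2 → ℕ} (hs : s < b) :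
    liftCell b m a t s 1 = y ↔ t 1 = y / b ∧ s = y % b := by
  rw [liftCell_one, eq_comm (a := t 1), eq_comm (a := s), Nat.div_mod_unique (by omega),
    mul_comm, add_comm]
  exact (and_iff_left hs).symm

theorem liftCell_div_eq_iff {a s d e a₀ a₁ : ℕ} {t : Fin 2 → ℕ} (hde : d + e = m)
    (ht : t 0 < b ^ m) (hs : s < b) :
    (liftCell b m a t s 0 / b ^ (m - d) = a₀ ∧ liftCell b m a t s 1 / b ^ (m - e + 1) = a₁) ↔
      a = a₀ / b ^ d ∧ t 0 / b ^ (m - d) = a₀ % b ^ d ∧ t 1 / b ^ (m - e) = a₁ := by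
  have hb : 0 < b := by omega
  have hlt : t 0 / b ^ (m - d) < b ^ d := by
    rw [Nat.div_lt_iff_lt_mul (by positivity), ← pow_add, Nat.add_sub_cancel' (by omega)]
    exact ht
  have hdrop : (t 1 * b + s) / b = t 1 := by
    rw [add_comm, Nat.add_mul_div_right _ _ hb, Nat.div_eq_of_lt hs, zero_add]
  rw [liftCell_zero, Nat.add_mul_pow_div_pow hb (by omega), liftCell_one, pow_succ',
    ← Nat.div_div_eq_div_mul, hdrop, ← and_assoc]
  refine and_congr_left' ?_
  rw [eq_comm (a := a), eq_comm (a := t 0 / _), Nat.div_mod_unique (by positivity), mul_comm,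
    add_comm, and_iff_left hlt]

theorem liftCell_lt {a s : ℕ} {t : Fin 2 → ℕ} (ha : a < b) (ht : ∀ j, t j < b ^ m) (hs : s < b) :
    ∀ j, liftCell b m a t s j < b ^ (m + 1) := by
  refine Fin.forall_fin_two.2 ⟨?_, ?_⟩
  · rw [liftCell_zero, pow_succ']
    nlinarith [Nat.mul_le_mul_right (b ^ m) ha, ht 0]
  · rw [liftCell_one, pow_succ]
    nlinarith [Nat.mul_le_mul_right b (ht 1)]

end Cells

section Glue

open Fin.NatCast

variable {b m : ℕ} [NeZero b]

/-- For the cells `t` of a pattern `t 1 < b ^ m`, so the cast to `Fin (b ^ m)` does not wrap. -/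
def glue (T : Fin b → Finset (Fin 2 → ℕ)) (σ : Fin (b ^ m) → Equiv.Perm (Fin b)) :
    Finset (Fin 2 → ℕ) :=
  univ.biUnion fun a ↦ (T a).image fun t ↦ liftCell b m a t (σ (t 1 : Fin (b ^ m)) a)

variable {T T' : Fin b → Finset (Fin 2 → ℕ)} {σ σ' : Fin (b ^ m) → Equiv.Perm (Fin b)}

theorem mem_glue {k : Fin 2 → ℕ} :
    k ∈ glue T σ ↔ ∃ a, ∃ t ∈ T a, liftCell b m a t (σ (t 1 : Fin (b ^ m)) a) = k := by
  simp [glue]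

theorem lt_of_mem_glue (hT : ∀ a, IsNetPattern b m 2 (T a)) {k : Fin 2 → ℕ}
    (hk : k ∈ glue T σ) : ∀ j, k j < b ^ (m + 1) := by
  obtain ⟨a, t, ht, rfl⟩ := mem_glue.1 hk
  exact liftCell_lt a.isLt ((hT a).1 t ht) (σ _ a).isLt

theorem existsUnique_mem_glue_apply_one_eq (hT : ∀ a, IsNetPattern b m 2 (T a)) {y : ℕ}
    (hy : y < b ^ (m + 1)) : ∃! k, k ∈ glue T σ ∧ k 1 = y := by
  have hb : 0 < b := Nat.pos_of_neZero b
  have hq : y / b < b ^ m := by rw [Nat.div_lt_iff_lt_mul hb, ← pow_succ]; exact hy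
  let q : Fin (b ^ m) := ⟨y / b, hq⟩
  have hcast : ∀ t : Fin 2 → ℕ, t 1 = y / b → (t 1 : Fin (b ^ m)) = q := fun t h ↦ by
    ext; simp [h, q, Nat.mod_eq_of_lt hq]
  let a := (σ q).symm ⟨y % b, Nat.mod_lt _ hb⟩
  obtain ⟨t, ⟨ht, htq⟩, htu⟩ := (hT a).existsUnique_apply_eq 1 hq
  refine ⟨liftCell b m a t (σ (t 1) a), ⟨mem_glue.2 ⟨a, t, ht, rfl⟩, ?_⟩, ?_⟩
  · rw [liftCell_one_eq_iff (σ _ a).isLt, hcast t htq]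
    simp [a, htq]
  · rintro k ⟨hk, hk₁⟩
    obtain ⟨a', t', ht', rfl⟩ := mem_glue.1 hk
    obtain ⟨ht'q, hs⟩ := (liftCell_one_eq_iff (σ _ a').isLt).1 hk₁
    rw [hcast t' ht'q] at hs
    obtain rfl : a' = a := (Equiv.eq_symm_apply _).2 (Fin.ext hs)
    rw [htu t' ⟨ht', ht'q⟩]

theorem existsUnique_mem_glue_div_eq (hT : ∀ a, IsNetPattern b m 2 (T a)) {d e a₀ a₁ : ℕ}
    (hde : d + e = m) (ha₀ : a₀ < b ^ (d + 1)) (ha₁ : a₁ < b ^ e) :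
    ∃! k, k ∈ glue T σ ∧ k 0 / b ^ (m - d) = a₀ ∧ k 1 / b ^ (m - e + 1) = a₁ := by
  have hbd : 0 < b ^ d := pow_pos (Nat.pos_of_neZero b) d
  have hd : a₀ / b ^ d < b := by
    rw [Nat.div_lt_iff_lt_mul hbd, mul_comm, ← pow_succ]; exact ha₀
  let a : Fin b := ⟨a₀ / b ^ d, hd⟩
  obtain ⟨t, ⟨ht, ht₀, ht₁⟩, htu⟩ := (isNetPattern_two_iff.1 (hT a)).2 d e hde
    (a₀ % b ^ d) a₁ (Nat.mod_lt _ hbd) ha₁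
  have hbox : ∀ a' : Fin b, ∀ t' ∈ T a', _ := fun a' t' ht' ↦
    liftCell_div_eq_iff (a := a') (s := σ (t' 1) a') (a₀ := a₀) (a₁ := a₁) hde
      ((hT a').1 t' ht' 0) (σ _ a').isLt
  refine ⟨liftCell b m a t (σ (t 1) a), ⟨mem_glue.2 ⟨a, t, ht, rfl⟩,
    (hbox a t ht).2 ⟨rfl, ht₀, ht₁⟩⟩, ?_⟩
  rintro k ⟨hk, hk'⟩
  obtain ⟨a', t', ht', rfl⟩ := mem_glue.1 hk
  obtain ⟨ha', h₀, h₁⟩ := (hbox a' t' ht').1 hk'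
  obtain rfl : a' = a := Fin.ext ha'
  rw [htu t' ⟨ht', h₀, h₁⟩]

theorem isNetPattern_glue (hT : ∀ a, IsNetPattern b m 2 (T a)) :
    IsNetPattern b (m + 1) 2 (glue T σ) := by
  rw [isNetPattern_two_iff]
  refine ⟨fun k hk ↦ lt_of_mem_glue hT hk, fun c₀ c₁ hc a₀ a₁ ha₀ ha₁ ↦ ?_⟩
  rcases c₀ with _ | d
  · obtain rfl : c₁ = m + 1 := by omega
    obtain rfl : a₀ = 0 := by simpa using ha₀
    simp only [Nat.sub_zero, Nat.sub_self, pow_zero, Nat.div_one]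
    refine (existsUnique_and_congr fun k hk ↦ ?_).1
      (existsUnique_mem_glue_apply_one_eq hT ha₁)
    exact (and_iff_right (Nat.div_eq_of_lt (lt_of_mem_glue hT hk 0))).symm
  · rw [Nat.add_sub_add_right, show m + 1 - c₁ = m - c₁ + 1 by omega]
    exact existsUnique_mem_glue_div_eq hT (by omega) ha₀ ha₁

theorem mem_and_apply_eq_of_glue_eq (hT : ∀ a, IsNetPattern b m 2 (T a))
    (hT' : ∀ a, IsNetPattern b m 2 (T' a)) (h : glue T σ = glue T' σ') (a : Fin b)
    {t : Fin 2 → ℕ} (ht : t ∈ T a) :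
    t ∈ T' a ∧ σ (t 1) a = σ' (t 1) a := by
  obtain ⟨a', t', ht', heq⟩ := mem_glue.1 (h ▸ mem_glue.2 ⟨a, t, ht, rfl⟩)
  obtain ⟨ha, rfl, hs⟩ := eq_of_liftCell_eq ((hT' a').1 t' ht' 0) ((hT a).1 t ht 0)
    (σ' _ a').isLt (σ _ a).isLt heq
  obtain rfl : a' = a := Fin.ext ha
  exact ⟨ht', (Fin.ext hs).symm⟩

theorem glue_injective (hT : ∀ a, IsNetPattern b m 2 (T a))
    (hT' : ∀ a, IsNetPattern b m 2 (T' a)) (h : glue T σ = glue T' σ') : T = T' ∧ σ = σ' := by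
  refine ⟨funext fun a ↦ Finset.ext fun t ↦ ⟨fun ht ↦ ?_, fun ht ↦ ?_⟩,
    funext fun q ↦ Equiv.ext fun a ↦ ?_⟩
  · exact (mem_and_apply_eq_of_glue_eq hT hT' h a ht).1
  · exact (mem_and_apply_eq_of_glue_eq hT' hT h.symm a ht).1
  obtain ⟨t, ⟨ht, htq⟩, -⟩ := (hT a).existsUnique_apply_eq 1 q.isLt
  simpa [htq] using (mem_and_apply_eq_of_glue_eq hT hT' h a ht).2

end Glue

section Strip

variable {b m : ℕ} {S : Finset (Fin 2 → ℕ)}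

theorem existsUnique_mem_of_div_eq (hS : IsNetPattern b (m + 1) 2 S) (a : Fin b)
    {q : ℕ} (hq : q < b ^ m) : ∃! k, k ∈ S ∧ k 0 / b ^ m = a ∧ k 1 / b = q := by
  simpa using (isNetPattern_two_iff.1 hS).2 1 m (by omega) a q (by simp) hq

variable (m) in
def stripPattern (S : Finset (Fin 2 → ℕ)) (a : Fin b) : Finset (Fin 2 → ℕ) :=
  (S.filter fun k ↦ k 0 / b ^ m = a).image (lowerCell b m)

variable [NeZero b]

theorem exists_perm_of_isNetPattern (hS : IsNetPattern b (m + 1) 2 S) (q : ℕ) (hq : q < b ^ m) :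
    ∃ π : Equiv.Perm (Fin b),
      ∀ a : Fin b, ∀ k ∈ S, k 0 / b ^ m = a → k 1 / b = q → (π a : ℕ) = k 1 % b := by
  have hb : 0 < b := Nat.pos_of_neZero b
  choose f hf using fun a ↦ (existsUnique_mem_of_div_eq hS a hq).exists
  let g : Fin b → Fin b := fun a ↦ ⟨f a 1 % b, Nat.mod_lt _ hb⟩
  have hg : g.Injective := by
    intro a a' h
    have h₁ : f a 1 = f a' 1 := by
      rw [← Nat.div_add_mod' (f a 1) b, ← Nat.div_add_mod' (f a' 1) b, (hf a).2.2, (hf a').2.2]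
      exact congrArg (q * b + ·) (Fin.val_eq_of_eq h)
    have hfa : f a = f a' := (hS.existsUnique_apply_eq 1 (hS.1 _ (hf a).1 1)).unique
      ⟨(hf a).1, rfl⟩ ⟨(hf a').1, h₁.symm⟩
    exact Fin.ext (by rw [← (hf a).2.1, ← (hf a').2.1, hfa])
  refine ⟨Equiv.ofBijective g (Finite.injective_iff_bijective.1 hg), fun a k hk ha hkq ↦ ?_⟩
  rw [(existsUnique_mem_of_div_eq hS a hq).unique ⟨hk, ha, hkq⟩ (hf a)]
  rfl

theorem div_eq_and_div_eq_iff_lowerCell {d e a₀ a₁ : ℕ} (hde : d + e = m) (k : Fin 2 → ℕ) :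
    (k 0 / b ^ (m - d) = a₀ ∧ k 1 / b ^ (m - e + 1) = a₁) ↔
      k 0 / b ^ m = a₀ / b ^ d ∧ lowerCell b m k 0 / b ^ (m - d) = a₀ % b ^ d ∧
        lowerCell b m k 1 / b ^ (m - e) = a₁ := by
  have hb : 0 < b := Nat.pos_of_neZero b
  have h := liftCell_div_eq_iff (a := k 0 / b ^ m) (t := lowerCell b m k) (a₀ := a₀) (a₁ := a₁)
    hde (Nat.mod_lt (k 0) (pow_pos hb m)) (Nat.mod_lt (k 1) hb)
  rwa [liftCell_lowerCell] at h

theorem isNetPattern_stripPattern (hS : IsNetPattern b (m + 1) 2 S) (a : Fin b) :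
    IsNetPattern b m 2 (stripPattern m S a) := by
  have hb : 0 < b := Nat.pos_of_neZero b
  have hq : ∀ k ∈ S, k 1 / b < b ^ m := fun k hk ↦ by
    rw [Nat.div_lt_iff_lt_mul hb, ← pow_succ]; exact hS.1 k hk 1
  have hinj : Set.InjOn (lowerCell b m) (S.filter fun k ↦ k 0 / b ^ m = a) := by
    intro k hk k' hk' h
    rw [coe_filter] at hk hk'
    exact (existsUnique_mem_of_div_eq hS a (hq k hk.1)).unique ⟨hk.1, hk.2, rfl⟩
      ⟨hk'.1, hk'.2, (congrFun h 1).symm⟩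
  rw [isNetPattern_two_iff]
  refine ⟨fun t ht ↦ ?_, fun d e hde r a₁ hr ha₁ ↦ ?_⟩
  · obtain ⟨k, hk, rfl⟩ := mem_image.1 ht
    exact Fin.forall_fin_two.2 ⟨Nat.mod_lt _ (by positivity), hq k (mem_filter.1 hk).1⟩
  have hlt : (a : ℕ) * b ^ d + r < b ^ (d + 1) := by
    rw [pow_succ']
    nlinarith [Nat.mul_le_mul_right (b ^ d) a.isLt]
  have hbox := (isNetPattern_two_iff.1 hS).2 (d + 1) e (by omega) _ a₁ hlt ha₁
  rw [Nat.add_sub_add_right, show m + 1 - e = m - e + 1 by omega] at hbox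
  rw [stripPattern, Finset.existsUnique_mem_image_iff hinj]
  refine (existsUnique_congr fun k ↦ ?_).1 hbox
  obtain ⟨hdiv, hmod⟩ :=
    (Nat.div_mod_unique (a := a * b ^ d + r) (d := a) (c := r) (pow_pos hb d)).2 ⟨by ring, hr⟩
  rw [div_eq_and_div_eq_iff_lowerCell hde, mem_filter, hdiv, hmod, and_assoc]

end Strip

section Count

open Fin.NatCast

variable {b m : ℕ} [NeZero b] {S : Finset (Fin 2 → ℕ)}

theorem exists_glue_stripPattern_eq (hS : IsNetPattern b (m + 1) 2 S) :
    ∃ σ : Fin (b ^ m) → Equiv.Perm (Fin b), glue (stripPattern m S) σ = S := by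
  have hb : 0 < b := Nat.pos_of_neZero b
  choose σ hσ using fun q : Fin (b ^ m) ↦ exists_perm_of_isNetPattern hS q q.isLt
  have hlift : ∀ a : Fin b, ∀ k ∈ S, k 0 / b ^ m = a →
      liftCell b m a (lowerCell b m k) (σ (lowerCell b m k 1 : Fin (b ^ m)) a) = k := by
    intro a k hk ha
    have hq : k 1 / b < b ^ m := by rw [Nat.div_lt_iff_lt_mul hb, ← pow_succ]; exact hS.1 k hk 1
    have hcast : (lowerCell b m k 1 : Fin (b ^ m)) = ⟨k 1 / b, hq⟩ := by
      ext; simp [lowerCell, Nat.mod_eq_of_lt hq]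
    rw [hcast, hσ _ a k hk ha rfl, ← ha]
    exact liftCell_lowerCell k
  refine ⟨σ, Finset.ext fun k ↦ ⟨fun hk ↦ ?_, fun hk ↦ ?_⟩⟩
  · obtain ⟨a, t, ht, rfl⟩ := mem_glue.1 hk
    obtain ⟨k, hkS, rfl⟩ := mem_image.1 ht
    obtain ⟨hkS, ha⟩ := mem_filter.1 hkS
    rwa [hlift a k hkS ha]
  · have ha : k 0 / b ^ m < b := by
      rw [Nat.div_lt_iff_lt_mul (by positivity), ← pow_succ']; exact hS.1 k hk 0
    exact mem_glue.2 ⟨⟨k 0 / b ^ m, ha⟩, lowerCell b m k,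
      mem_image_of_mem _ (mem_filter.2 ⟨hk, rfl⟩), hlift _ k hk rfl⟩

theorem card_isNetPattern_succ :
    Nat.card {S // IsNetPattern b (m + 1) 2 S} =
      Nat.card {S // IsNetPattern b m 2 S} ^ b * b.factorial ^ (b ^ m) := by
  let F : (Fin b → {S // IsNetPattern b m 2 S}) × (Fin (b ^ m) → Equiv.Perm (Fin b)) →
      {S // IsNetPattern b (m + 1) 2 S} :=
    fun p ↦ ⟨glue (fun a ↦ (p.1 a).1) p.2, isNetPattern_glue fun a ↦ (p.1 a).2⟩
  have hF : F.Bijective := by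
    refine ⟨fun p p' h ↦ ?_, fun S ↦ ?_⟩
    · obtain ⟨hT, hσ⟩ := glue_injective (fun a ↦ (p.1 a).2) (fun a ↦ (p'.1 a).2)
        (congrArg Subtype.val h)
      exact Prod.ext (funext fun a ↦ Subtype.ext (congrFun hT a)) hσ
    · obtain ⟨σ, hσ⟩ := exists_glue_stripPattern_eq S.2
      exact ⟨(fun a ↦ ⟨_, isNetPattern_stripPattern S.2 a⟩, σ), Subtype.ext hσ⟩
  rw [← Nat.card_congr (Equiv.ofBijective F hF), Nat.card_prod, Nat.card_fun, Nat.card_fun,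
    Nat.card_perm]
  simp

end Count

theorem card_isNetPattern_two {b : ℕ} [NeZero b] (m : ℕ) :
    Nat.card {S // IsNetPattern b m 2 S} = b.factorial ^ (m * b ^ (m - 1)) := by
  induction m with
  | zero => simp [isNetPattern_zero_iff]
  | succ n ih =>
    rw [card_isNetPattern_succ, ih, ← pow_mul, ← pow_add]
    rcases n with _ | n
    · simp
    · simp only [Nat.add_sub_cancel, pow_succ]
      ring_nf

theorem stmt0 (b : ℕ) (hb : 2 ≤ b) :
    patternCount b 2 0 = 1 ∧
    (∀ m : ℕ, 1 ≤ m →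
      patternCount b 2 m = (patternCount b 2 (m - 1)) ^ b * (Nat.factorial b) ^ (b ^ (m - 1))) ∧
    (∀ m : ℕ, patternCount b 2 m = (Nat.factorial b) ^ (m * b ^ (m - 1))) := by
  have : NeZero b := ⟨by omega⟩
  have hcount : ∀ m, patternCount b 2 m = Nat.card {S // IsNetPattern b m 2 S} :=
    patternCount_eq_card (by omega)
  refine ⟨by simp [hcount, card_isNetPattern_two], fun m hm ↦ ?_, fun m ↦ ?_⟩
  · obtain ⟨n, rfl⟩ := Nat.exists_eq_add_of_le' hm
    simp [hcount, card_isNetPattern_succ]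
  · rw [hcount, card_isNetPattern_two]
end

section
/- For any d ≥ 1, m ≥ 1, and base b ≥ 2, the number a_{b,d}(m) of admissible patterns of non-empty sub-cubes for (0,m,d)-nets in base b satisfies a_{b,d}(m) ≤ (b!)^{m·b^{m-1}·(d-1)}. -/
/-!
Pass from points to the integer indices of their sub-cubes, and fix a reference coordinate `i`.
By the net property every index vector of an admissible pattern is determined by its
`i`-coordinate, and for any other coordinate `j` the pair `(i, j)` is itself a two-dimensional
net. In it, fix the top `p` digits of `s i` and the top `q` digits of `s j` with `p + q + 1 = m`:
the next digit of `s i` then determines the next digit of `s j`, and by uniqueness in the cells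
one level coarser this correspondence is a permutation of the `b` digits. Reading the digits of
`s j` from the top, these permutations reconstruct the pattern; there are `m * b ^ (m - 1)` of
them for each of the `d - 1` coordinates `j`.
-/

open Finset

section Digits

variable {b : ℕ}

lemma div_pow_succ (x q : ℕ) : x / b ^ (q + 1) = x / b ^ q / b := by
  rw [pow_succ, Nat.div_div_eq_div_mul]

lemma mul_add_lt_pow_succ {a t k : ℕ} (ha : a < b ^ k) (ht : t < b) :
    a * b + t < b ^ (k + 1) := by
  rw [pow_succ]
  nlinarith

lemma div_pow_lt_pow {x k l : ℕ} (hx : x < b ^ (k + l)) : x / b ^ l < b ^ k :=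
  Nat.div_lt_of_lt_mul (by rwa [← pow_add, add_comm])

end Digits

section CubeIndex

variable {b m d : ℕ}

lemma cubeIdx_lt (hb : 0 < b) {x : Fin d → ℝ} {j : Fin d} (hx : x j ∈ Set.Ico (0 : ℝ) 1) :
    cubeIdx b m d x j < b ^ m := by
  rw [cubeIdx, Int.floor_toNat, Nat.floor_lt (by have := hx.1; positivity)]
  push_cast
  exact mul_lt_of_lt_one_right (by positivity) hx.2

lemma cubeIdx_div_pow (hb : 0 < b) {c : ℕ} (hc : c ≤ m) (x : Fin d → ℝ) (j : Fin d) :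
    cubeIdx b m d x j / b ^ (m - c) = ⌊(b : ℝ) ^ c * x j⌋₊ := by
  have hsplit : (b : ℝ) ^ m = (b : ℝ) ^ c * (b : ℝ) ^ (m - c) := by
    rw [← pow_add, Nat.add_sub_cancel' hc]
  rw [cubeIdx, Int.floor_toNat, ← Nat.floor_div_natCast, hsplit]
  congr 1
  have : (0 : ℝ) < (b : ℝ) ^ (m - c) := by positivity
  push_cast
  field_simp

lemma floor_pow_mul_eq_iff (hb : 0 < b) {y : ℝ} (hy : 0 ≤ y) (c a : ℕ) :
    ⌊(b : ℝ) ^ c * y⌋₊ = a ↔ (a : ℝ) / (b : ℝ) ^ c ≤ y ∧ y < ((a : ℝ) + 1) / (b : ℝ) ^ c := by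
  have hbc : (0 : ℝ) < (b : ℝ) ^ c := by positivity
  rw [Nat.floor_eq_iff (by positivity), div_le_iff₀ hbc, lt_div_iff₀ hbc, mul_comm y]

end CubeIndex

/-- `s j / b ^ (m - c j)` is the string of the top `c j` base-`b` digits of `s j`: this is the
net property read off the indices of the sub-cubes. -/
def IsIndexNet (b m d : ℕ) (S : Finset (Fin d → ℕ)) : Prop :=
  (∀ s ∈ S, ∀ j, s j < b ^ m) ∧
  ∀ c : Fin d → ℕ, ∑ j, c j = m → ∀ a : Fin d → ℕ, (∀ j, a j < b ^ c j) →
    ∃! s, s ∈ S ∧ ∀ j, s j / b ^ (m - c j) = a j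

lemma Admissible.isIndexNet {b m d : ℕ} (hb : 0 < b) {S : Finset (Fin d → ℕ)}
    (h : Admissible b m d S) : IsIndexNet b m d S := by
  obtain ⟨P, ⟨-, hP01, hPnet⟩, rfl, -⟩ := h
  refine ⟨?_, fun c hc a ha => ?_⟩
  · rintro _ hs j
    obtain ⟨x, hx, rfl⟩ := mem_image.1 hs
    exact cubeIdx_lt hb (hP01 x hx j)
  have hcm : ∀ j, c j ≤ m := fun j => hc ▸ single_le_sum (by simp) (mem_univ j)
  have hcell : ∀ x ∈ P, (∀ j, cubeIdx b m d x j / b ^ (m - c j) = a j) ↔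
      ∀ j, (a j : ℝ) / (b : ℝ) ^ c j ≤ x j ∧ x j < ((a j : ℝ) + 1) / (b : ℝ) ^ c j :=
    fun x hx => forall_congr' fun j => by
      rw [cubeIdx_div_pow hb (hcm j), floor_pow_mul_eq_iff hb (hP01 x hx j).1]
  obtain ⟨x, ⟨hx, hxa⟩, hxu⟩ := hPnet c hc a ha
  refine ⟨cubeIdx b m d x, ⟨mem_image_of_mem _ hx, (hcell x hx).2 hxa⟩, ?_⟩
  rintro _ ⟨hs, hsa⟩
  obtain ⟨y, hy, rfl⟩ := mem_image.1 hs
  rw [hxu y ⟨hy, (hcell y hy).1 hsa⟩]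

namespace IsIndexNet

variable {b m d : ℕ} {S S' : Finset (Fin d → ℕ)}

lemma existsUnique_of_iff (N : IsIndexNet b m d S) {c a : Fin d → ℕ} (hc : ∑ j, c j = m)
    (ha : ∀ j, a j < b ^ c j) {p : (Fin d → ℕ) → Prop}
    (hp : ∀ s ∈ S, (∀ j, s j / b ^ (m - c j) = a j) ↔ p s) :
    ∃! s, s ∈ S ∧ p s := by
  obtain ⟨s, ⟨hs, hsa⟩, hsu⟩ := N.2 c hc a ha
  exact ⟨s, ⟨hs, (hp s hs).1 hsa⟩, fun s' ⟨hs', hps'⟩ => hsu s' ⟨hs', (hp s' hs').2 hps'⟩⟩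

lemma existsUnique_eq (N : IsIndexNet b m d S) (i : Fin d) {a : ℕ} (ha : a < b ^ m) :
    ∃! s, s ∈ S ∧ s i = a := by
  classical
  refine N.existsUnique_of_iff (c := Pi.single i m) (a := Pi.single i a) (by simp)
    (fun j => ?_) (fun s hs => ⟨fun h => by simpa using h i, fun h j => ?_⟩)
  · by_cases hj : j = i
    · subst hj; simpa using ha
    · simp [hj]
  · by_cases hj : j = i
    · subst hj; simpa using h
    · simp [hj, Nat.div_eq_of_lt (N.1 s hs j)]

lemma existsUnique_pair (N : IsIndexNet b m d S) {i j : Fin d} (hij : i ≠ j) {k l : ℕ}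
    (hkl : k + l = m) {a₁ a₂ : ℕ} (ha₁ : a₁ < b ^ k) (ha₂ : a₂ < b ^ l) :
    ∃! s, s ∈ S ∧ s i / b ^ l = a₁ ∧ s j / b ^ k = a₂ := by
  classical
  refine N.existsUnique_of_iff (c := Pi.single i k + Pi.single j l)
    (a := Pi.single i a₁ + Pi.single j a₂) (by simp [sum_add_distrib, hkl])
    (fun j' => ?_) (fun s hs => ⟨fun h => ?_, fun h j' => ?_⟩)
  · by_cases hi : j' = i
    · subst hi; simpa [hij] using ha₁
    · by_cases hj : j' = j
      · subst hj; simpa [hi] using ha₂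
      · simp [hi, hj]
  · have hi := h i
    have hj := h j
    simp only [Pi.add_apply, Pi.single_eq_same, Pi.single_eq_of_ne hij,
      Pi.single_eq_of_ne hij.symm, add_zero, zero_add] at hi hj
    exact ⟨by rwa [show m - k = l by omega] at hi, by rwa [show m - l = k by omega] at hj⟩
  · by_cases hi : j' = i
    · subst hi; simpa [hij, show m - k = l by omega] using h.1
    · by_cases hj : j' = j
      · subst hj; simpa [hi, show m - l = k by omega] using h.2
      · simp [hi, hj, Nat.div_eq_of_lt (N.1 s hs j')]

section DigitMap

variable (N : IsIndexNet b m d S) {i j : Fin d} (hij : i ≠ j) {p q : ℕ} (hpq : p + q + 1 = m)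

noncomputable def cellPoint (a₁ : Fin (b ^ p)) (u : Fin (b ^ q)) (t : Fin b) : Fin d → ℕ :=
  (N.existsUnique_pair hij (by omega : p + 1 + q = m) (mul_add_lt_pow_succ a₁.isLt t.isLt)
    u.isLt).exists.choose

variable (a₁ : Fin (b ^ p)) (u : Fin (b ^ q)) (t : Fin b)

lemma cellPoint_spec :
    N.cellPoint hij hpq a₁ u t ∈ S ∧ N.cellPoint hij hpq a₁ u t i / b ^ q = a₁ * b + t ∧
      N.cellPoint hij hpq a₁ u t j / b ^ (p + 1) = u :=
  (N.existsUnique_pair hij (by omega : p + 1 + q = m) (mul_add_lt_pow_succ a₁.isLt t.isLt)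
    u.isLt).exists.choose_spec

lemma eq_cellPoint {s : Fin d → ℕ} (hs : s ∈ S) (hsi : s i / b ^ q = a₁ * b + t)
    (hsj : s j / b ^ (p + 1) = u) : s = N.cellPoint hij hpq a₁ u t :=
  (N.existsUnique_pair hij (by omega : p + 1 + q = m) (mul_add_lt_pow_succ a₁.isLt t.isLt)
    u.isLt).unique ⟨hs, hsi, hsj⟩ (N.cellPoint_spec hij hpq a₁ u t)

noncomputable def digitMap : Fin b → Fin b :=
  fun t => ⟨N.cellPoint hij hpq a₁ u t j / b ^ p % b, Nat.mod_lt _ t.pos⟩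

lemma digitMap_eq {s : Fin d → ℕ} (hs : s ∈ S) (hsi : s i / b ^ q = a₁ * b + t)
    (hsj : s j / b ^ (p + 1) = u) : (N.digitMap hij hpq a₁ u t : ℕ) = s j / b ^ p % b := by
  rw [N.eq_cellPoint hij hpq a₁ u t hs hsi hsj]
  rfl

lemma digitMap_injective : Function.Injective (N.digitMap hij hpq a₁ u) := by
  intro t t' htt'
  obtain ⟨hs, hsi, hsj⟩ := N.cellPoint_spec hij hpq a₁ u t
  obtain ⟨hs', hs'i, hs'j⟩ := N.cellPoint_spec hij hpq a₁ u t'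
  set s := N.cellPoint hij hpq a₁ u t
  set s' := N.cellPoint hij hpq a₁ u t'
  set r := N.digitMap hij hpq a₁ u t
  -- Both points lie in the cell with `i`-digits `a₁` and `j`-digits `u, r`, one level coarser.
  have hcoarse : ∀ x : Fin d → ℕ, ∀ τ : Fin b, x i / b ^ q = a₁ * b + τ →
      x j / b ^ (p + 1) = u → x j / b ^ p % b = r →
      x i / b ^ (q + 1) = a₁ ∧ x j / b ^ p = u * b + r := by
    intro x τ hxi hxj hxr
    refine ⟨?_, ?_⟩
    · rw [div_pow_succ, hxi, add_comm, Nat.add_mul_div_right _ _ t.pos, Nat.div_eq_of_lt τ.isLt,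
        zero_add]
    · rw [← hxj, ← hxr, div_pow_succ, Nat.div_add_mod']
  have hsr := hcoarse s t hsi hsj (N.digitMap_eq hij hpq a₁ u t hs hsi hsj).symm
  have hs'r := hcoarse s' t' hs'i hs'j
    (by rw [← N.digitMap_eq hij hpq a₁ u t' hs' hs'i hs'j, ← htt'])
  have hss' : s = s' :=
    (N.existsUnique_pair hij (by omega : p + (q + 1) = m) a₁.isLt
      (mul_add_lt_pow_succ u.isLt r.isLt)).unique ⟨hs, hsr⟩ ⟨hs', hs'r⟩
  rw [hss', hs'i] at hsi
  exact Fin.ext (by omega)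

noncomputable def digitPerm : Equiv.Perm (Fin b) :=
  Equiv.ofBijective _ (N.digitMap_injective hij hpq a₁ u).bijective_of_finite

end DigitMap

variable (N : IsIndexNet b m d S)

lemma subset_of_digitMap_eq (N' : IsIndexNet b m d S') (i : Fin d)
    (h : ∀ j (hij : i ≠ j) p q (hpq : p + q + 1 = m) a₁ u,
      N.digitMap hij hpq a₁ u = N'.digitMap hij hpq a₁ u) :
    S ⊆ S' := by
  intro s hs
  obtain ⟨s', ⟨hs', hs'i⟩, -⟩ := N'.existsUnique_eq i (N.1 s hs i)
  suffices s = s' by rwa [this]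
  funext j
  by_cases hij : i = j
  · subst hij; exact hs'i.symm
  have hsplit : ∀ x p, x / b ^ p = x / b ^ (p + 1) * b + x / b ^ p % b := fun x p => by
    rw [div_pow_succ, Nat.div_add_mod']
  -- Going down from the top, each digit of `s j` is forced by the digits above it and by `s i`.
  have htop : ∀ q p, p + q = m → s j / b ^ p = s' j / b ^ p := by
    intro q
    induction q with
    | zero =>
      intro p (hp : p = m)
      subst hp
      rw [Nat.div_eq_of_lt (N.1 s hs j), Nat.div_eq_of_lt (N'.1 s' hs' j)]
    | succ q ih =>
      intro p hpq
      have hpq' : p + q + 1 = m := by omega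
      have hup := ih (p + 1) (by omega)
      have hb : 0 < b := Nat.pos_of_ne_zero fun hb => by
        have := N.1 s hs i
        simp [hb, ← hpq'] at this
      let a₁ : Fin (b ^ p) := ⟨s i / b ^ (q + 1), div_pow_lt_pow (hpq ▸ N.1 s hs i)⟩
      let u : Fin (b ^ q) :=
        ⟨s j / b ^ (p + 1), div_pow_lt_pow (by rw [show q + (p + 1) = m by omega]; exact N.1 s hs j)⟩
      let t : Fin b := ⟨s i / b ^ q % b, Nat.mod_lt _ hb⟩
      have hsi : s i / b ^ q = a₁ * b + t := hsplit (s i) q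
      have hdigit : s j / b ^ p % b = s' j / b ^ p % b := by
        rw [← N.digitMap_eq hij hpq' a₁ u t hs hsi rfl,
          ← N'.digitMap_eq hij hpq' a₁ u t hs' (hs'i ▸ hsi) hup.symm, h]
      rw [hsplit (s j), hsplit (s' j), hup, hdigit]
  simpa using htop m 0 (zero_add m)

noncomputable def permCode (i : Fin d) :
    {j // j ≠ i} × (Σ k : Fin m, Fin (b ^ (k : ℕ)) × Fin (b ^ (m - (k + 1)))) →
      Equiv.Perm (Fin b) :=
  fun x => N.digitPerm x.1.2.symm (by have := x.2.1.isLt; omega) x.2.2.1 x.2.2.2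

lemma eq_of_permCode_eq (N' : IsIndexNet b m d S') {i : Fin d}
    (h : N.permCode i = N'.permCode i) : S = S' := by
  have hmap : ∀ j (hij : i ≠ j) p q (hpq : p + q + 1 = m) a₁ u,
      N.digitMap hij hpq a₁ u = N'.digitMap hij hpq a₁ u := by
    intro j hij p q hpq a₁ u
    obtain rfl : q = m - (p + 1) := by omega
    exact congrArg DFunLike.coe (congrFun h ⟨⟨j, hij.symm⟩, ⟨p, by omega⟩, a₁, u⟩)
  exact (N.subset_of_digitMap_eq N' i hmap).antisymm
    (N'.subset_of_digitMap_eq N i fun j hij p q hpq a₁ u => (hmap j hij p q hpq a₁ u).symm)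

end IsIndexNet

lemma card_levelCells (b m : ℕ) :
    Fintype.card (Σ k : Fin m, Fin (b ^ (k : ℕ)) × Fin (b ^ (m - (k + 1)))) = m * b ^ (m - 1) := by
  rw [Fintype.card_sigma]
  calc ∑ k : Fin m, Fintype.card (Fin (b ^ (k : ℕ)) × Fin (b ^ (m - (k + 1))))
      = ∑ _k : Fin m, b ^ (m - 1) := sum_congr rfl fun k _ => by
        rw [Fintype.card_prod, Fintype.card_fin, Fintype.card_fin, ← pow_add]
        congr 1
        omega
    _ = m * b ^ (m - 1) := by simp

theorem stmt1_general (b d m : ℕ) (hb : 2 ≤ b) (hd : 1 ≤ d) :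
    patternCount b d m ≤ (Nat.factorial b) ^ (m * b ^ (m - 1) * (d - 1)) := by
  let i : Fin d := ⟨0, hd⟩
  let code (S : {S // Admissible b m d S}) := (S.2.isIndexNet (by omega)).permCode i
  have hcode : Function.Injective code := fun S S' h =>
    Subtype.ext (IsIndexNet.eq_of_permCode_eq _ _ h)
  calc patternCount b d m = Nat.card {S // Admissible b m d S} := (Nat.card_coe_set_eq _).symm
    _ ≤ Nat.card ({j // j ≠ i} × (Σ k : Fin m, Fin (b ^ (k : ℕ)) × Fin (b ^ (m - (k + 1)))) →
        Equiv.Perm (Fin b)) := Nat.card_le_card_of_injective code hcode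
    _ = (Nat.factorial b) ^ (m * b ^ (m - 1) * (d - 1)) := by
      rw [Nat.card_eq_fintype_card, Fintype.card_fun, Fintype.card_perm, Fintype.card_fin,
        Fintype.card_prod, card_levelCells, Fintype.card_subtype_compl, Fintype.card_subtype_eq,
        Fintype.card_fin, mul_comm]

theorem stmt1 (b d m : ℕ) (hb : 2 ≤ b) (hd : 1 ≤ d) (hm : 1 ≤ m) :
    patternCount b d m ≤ (Nat.factorial b) ^ (m * b ^ (m - 1) * (d - 1)) :=
  stmt1_general b d m hb hd
end

section
/- Let N points be chosen independently and uniformly at random in [0,1)^d, and partition [0,1)^d into b^{md} equal sub-cubes. For a fixed set of k distinct sub-cubes, let p_N(k) be the probability that every one of the k sub-cubes contains at least one of the N points. Then p_N is non-increasing in k, and p_N(2k) ≤ (p_N(k))^2. -/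
open MeasureTheory Finset

/-- The uniform distribution on `[0,1)^d`. -/
noncomputable def unif (d : ℕ) : Measure (Fin d → ℝ) :=
  Measure.pi fun _ => volume.restrict (Set.Ico (0 : ℝ) 1)

/-- `N` points chosen independently and uniformly in `[0,1)^d`. -/
noncomputable def sampleMeasure (N d : ℕ) : Measure (Fin N → Fin d → ℝ) :=
  Measure.pi fun _ => unif d

/-- The sub-cube of side `b^{-m}` indexed by `a`. -/
def cube (b m d : ℕ) (a : Fin d → ℕ) : Set (Fin d → ℝ) :=
  {x | ∀ j, (a j : ℝ) / (b : ℝ) ^ m ≤ x j ∧ x j < ((a j : ℝ) + 1) / (b : ℝ) ^ m}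

/-- The event that every sub-cube indexed by `C` contains at least one of the `N` points. -/
def occEvent (b m d N : ℕ) (C : Finset (Fin d → ℕ)) : Set (Fin N → Fin d → ℝ) :=
  {ω | ∀ a ∈ C, ∃ i, ω i ∈ cube b m d a}

/-! Off a null set every point lies in exactly one of the `M = b^{md}` sub-cubes, all of
mass `1/M`, so the probability that the cubes of `C` are all occupied is `c_N(C) / M^N`,
where `c_N(C)` counts the maps `Fin N → cubes` whose range contains `C`. Relabelling cubes
shows that `c_N(C)` depends only on `#C`. For disjoint `A`, `B` one has
`M^N c_N(A ∪ B) ≤ c_N(A) c_N(B)`, by induction on `N`: conditioning on the cube of the first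
point, which misses `A` or misses `B`, reduces the step to Chebyshev's sum inequality for two
oppositely ordered sequences. -/

open Function
open scoped ENNReal

section Counting

variable {α : Type*} [Fintype α]

theorem card_mul_sum_mul_le_sum_mul_sum (u v : α → ℕ) (a c : ℕ)
    (h : ∀ x, u x = a ∧ c ≤ v x ∨ a ≤ u x ∧ v x = c) :
    Fintype.card α * ∑ x, u x * v x ≤ (∑ x, u x) * ∑ x, v x := by
  obtain ⟨u', rfl⟩ : ∃ u' : α → ℕ, u = fun x => a + u' x :=
    ⟨fun x => u x - a, funext fun x => show u x = a + (u x - a) by have := h x; omega⟩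
  obtain ⟨v', rfl⟩ : ∃ v' : α → ℕ, v = fun x => c + v' x :=
    ⟨fun x => v x - c, funext fun x => show v x = c + (v x - c) by have := h x; omega⟩
  have huv : ∀ x, (a + u' x) * (c + v' x) = a * c + a * v' x + c * u' x := fun x => by
    have : u' x * v' x = 0 := Nat.mul_eq_zero.2 (by have := h x; simp only at this; omega)
    linear_combination this
  simp only [huv, sum_add_distrib, ← mul_sum, sum_const, card_univ, smul_eq_mul]
  nlinarith [Nat.zero_le ((∑ x, u' x) * ∑ x, v' x)]

variable [DecidableEq α]

def coveringMaps (N : ℕ) (A : Finset α) : Finset (Fin N → α) :=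
  {f | ∀ a ∈ A, ∃ i, f i = a}

theorem coveringMaps_anti {N : ℕ} {A B : Finset α} (h : A ⊆ B) :
    coveringMaps N B ⊆ coveringMaps N A :=
  monotone_filter_right _ fun _ _ hf a ha => hf a (h ha)

theorem cons_mem_coveringMaps_iff {N : ℕ} {A : Finset α} (x : α) (g : Fin N → α) :
    (Fin.cons x g : Fin (N + 1) → α) ∈ coveringMaps (N + 1) A ↔
      g ∈ coveringMaps N (A.erase x) := by
  simp only [coveringMaps, mem_filter, mem_univ, true_and, mem_erase, Fin.exists_fin_succ,
    Fin.cons_zero, Fin.cons_succ]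
  exact ⟨fun h a ⟨hax, ha⟩ => (h a ha).resolve_left (Ne.symm hax),
    fun h a ha => (eq_or_ne x a).imp id fun hxa => h a ⟨hxa.symm, ha⟩⟩

theorem card_coveringMaps_succ (N : ℕ) (A : Finset α) :
    #(coveringMaps (N + 1) A) = ∑ x, #(coveringMaps N (A.erase x)) := by
  rw [coveringMaps, card_filter, ← (Fin.consEquiv fun _ => α).sum_comp,
    Fintype.sum_prod_type]
  refine sum_congr rfl fun x _ => ?_
  rw [coveringMaps, card_filter]
  refine sum_congr rfl fun g _ => if_congr ?_ rfl rfl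
  simpa [coveringMaps] using cons_mem_coveringMaps_iff (A := A) x g

theorem card_coveringMaps_congr (N : ℕ) {A B : Finset α} (h : #A = #B) :
    #(coveringMaps N A) = #(coveringMaps N B) := by
  obtain ⟨e⟩ : Nonempty (A ≃ B) := Fintype.card_eq.1 (by simpa using h)
  set σ := e.extendSubtype
  have hσ : ∀ x, σ x ∈ B ↔ x ∈ A := fun x =>
    ⟨fun hx => by_contra fun hxA => e.extendSubtype_not_mem x hxA hx, e.extendSubtype_mem x⟩
  refine card_nbij' (σ ∘ ·) (σ.symm ∘ ·) ?_ ?_ ?_ ?_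
  · simp only [coveringMaps, coe_filter, mem_univ, true_and]
    intro f hf b hb
    obtain ⟨i, hi⟩ := hf (σ.symm b) ((hσ _).1 (by simpa using hb))
    exact ⟨i, by simp [hi]⟩
  · simp only [coveringMaps, coe_filter, mem_univ, true_and]
    intro f hf a ha
    obtain ⟨i, hi⟩ := hf (σ a) ((hσ a).2 ha)
    exact ⟨i, by simp [hi]⟩
  all_goals intro f _; ext; simp

theorem card_pow_mul_card_coveringMaps_union_le (N : ℕ) {A B : Finset α} (hAB : Disjoint A B) :
    Fintype.card α ^ N * #(coveringMaps N (A ∪ B)) ≤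
      #(coveringMaps N A) * #(coveringMaps N B) := by
  induction N generalizing A B with
  | zero =>
    have hle : #(coveringMaps 0 (A ∪ B)) ≤ 1 := (card_le_univ _).trans (by simp)
    have hA := card_le_card (coveringMaps_anti (N := 0) (subset_union_left : A ⊆ A ∪ B))
    have hB := card_le_card (coveringMaps_anti (N := 0) (subset_union_right : B ⊆ A ∪ B))
    rw [pow_zero, one_mul]
    interval_cases #(coveringMaps 0 (A ∪ B)) <;> nlinarith
  | succ N ih =>
    calc Fintype.card α ^ (N + 1) * #(coveringMaps (N + 1) (A ∪ B))
        = Fintype.card α * ∑ x, Fintype.card α ^ N * #(coveringMaps N ((A ∪ B).erase x)) := by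
          rw [card_coveringMaps_succ, mul_sum, mul_sum, pow_succ]
          exact sum_congr rfl fun x _ => by ring
      _ ≤ Fintype.card α *
            ∑ x, #(coveringMaps N (A.erase x)) * #(coveringMaps N (B.erase x)) := by
          refine Nat.mul_le_mul_left _ (sum_le_sum fun x _ => ?_)
          rw [erase_union_distrib]
          exact ih (hAB.mono (erase_subset _ _) (erase_subset _ _))
      _ ≤ #(coveringMaps (N + 1) A) * #(coveringMaps (N + 1) B) := by
          rw [card_coveringMaps_succ, card_coveringMaps_succ]
          refine card_mul_sum_mul_le_sum_mul_sum _ _ #(coveringMaps N A) #(coveringMaps N B)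
            fun x => ?_
          have hA := card_le_card (coveringMaps_anti (N := N) (erase_subset x A))
          have hB := card_le_card (coveringMaps_anti (N := N) (erase_subset x B))
          by_cases hx : x ∈ A
          · rw [erase_eq_of_notMem (disjoint_left.1 hAB hx)]
            exact Or.inr ⟨hA, rfl⟩
          · rw [erase_eq_of_notMem hx]
            exact Or.inl ⟨rfl, hB⟩

end Counting

section Equipartition

variable {X α : Type*} [MeasurableSpace X] [Fintype α] [DecidableEq α]
  {μ : Measure X} {s : α → Set X} {p : ℝ≥0∞}

structure IsEquipartition (μ : Measure X) (s : α → Set X) (p : ℝ≥0∞) : Prop where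
  pairwise_disjoint : Pairwise (Disjoint on s)
  measurableSet : ∀ a, MeasurableSet (s a)
  ae_exists_mem : ∀ᵐ x ∂μ, ∃ a, x ∈ s a
  measure_eq : ∀ a, μ (s a) = p

def occupied (s : α → Set X) (N : ℕ) (A : Finset α) : Set (Fin N → X) :=
  {ω | ∀ a ∈ A, ∃ i, ω i ∈ s a}

namespace IsEquipartition

theorem measure_occupied [SigmaFinite μ] (h : IsEquipartition μ s p) (N : ℕ) (A : Finset α) :
    Measure.pi (fun _ : Fin N => μ) (occupied s N A) = #(coveringMaps N A) * p ^ N := by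
  have hcells : occupied s N A =ᵐ[Measure.pi fun _ => μ]
      ⋃ f ∈ coveringMaps N A, Set.univ.pi fun i => s (f i) := by
    have hcov : ∀ᵐ ω ∂Measure.pi (fun _ : Fin N => μ), ∀ i, ∃ a, ω i ∈ s a :=
      ae_all_iff.2 fun i =>
        Measure.tendsto_eval_ae_ae.eventually (p := fun x => ∃ a, x ∈ s a) h.ae_exists_mem
    refine Filter.eventuallyEq_set.2 ?_
    filter_upwards [hcov] with ω hω
    choose f hf using hω
    have hmem : ∀ i a, ω i ∈ s a ↔ f i = a := fun i a =>
      ⟨fun ha => by_contra fun hne => Set.disjoint_left.1 (h.pairwise_disjoint hne) (hf i) ha,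
        fun e => e ▸ hf i⟩
    simp [occupied, coveringMaps, hmem, ← funext_iff]
  rw [measure_congr hcells, measure_biUnion_finset]
  · simp [Measure.pi_pi, h.measure_eq]
  · intro f _ g _ hfg
    obtain ⟨i, hi⟩ := Function.ne_iff.1 hfg
    exact Set.disjoint_univ_pi.2 ⟨i, h.pairwise_disjoint hi⟩
  · exact fun f _ => MeasurableSet.univ_pi fun i => h.measurableSet (f i)

theorem card_mul_eq_one [IsProbabilityMeasure μ] (h : IsEquipartition μ s p) :
    (Fintype.card α : ℝ≥0∞) * p = 1 := by
  -- `occupied s 1 ∅` is the sure event.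
  simpa [occupied, coveringMaps] using (h.measure_occupied 1 ∅).symm

theorem measure_occupied_congr [SigmaFinite μ] (h : IsEquipartition μ s p) (N : ℕ)
    {A B : Finset α} (hAB : #A = #B) :
    Measure.pi (fun _ : Fin N => μ) (occupied s N A) =
      Measure.pi (fun _ : Fin N => μ) (occupied s N B) := by
  rw [h.measure_occupied, h.measure_occupied, card_coveringMaps_congr N hAB]

theorem measure_occupied_union_le [IsProbabilityMeasure μ] (h : IsEquipartition μ s p)
    (N : ℕ) {A B : Finset α} (hAB : Disjoint A B) :
    Measure.pi (fun _ : Fin N => μ) (occupied s N (A ∪ B)) ≤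
      Measure.pi (fun _ : Fin N => μ) (occupied s N A) *
        Measure.pi (fun _ : Fin N => μ) (occupied s N B) := by
  simp only [h.measure_occupied]
  have hcount : ((Fintype.card α ^ N * #(coveringMaps N (A ∪ B)) : ℕ) : ℝ≥0∞) ≤
      ((#(coveringMaps N A) * #(coveringMaps N B) : ℕ) : ℝ≥0∞) :=
    Nat.cast_le.2 (card_pow_mul_card_coveringMaps_union_le N hAB)
  calc (#(coveringMaps N (A ∪ B)) : ℝ≥0∞) * p ^ N
      = #(coveringMaps N (A ∪ B)) * (Fintype.card α * p) ^ N * p ^ N := by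
        rw [h.card_mul_eq_one, one_pow, mul_one]
    _ = ((Fintype.card α ^ N * #(coveringMaps N (A ∪ B)) : ℕ) : ℝ≥0∞) * p ^ N * p ^ N :=
        by push_cast; ring
    _ ≤ ((#(coveringMaps N A) * #(coveringMaps N B) : ℕ) : ℝ≥0∞) * p ^ N * p ^ N := by
        gcongr
    _ = #(coveringMaps N A) * p ^ N * (#(coveringMaps N B) * p ^ N) := by
        push_cast; ring

end IsEquipartition

end Equipartition

instance (d : ℕ) : IsProbabilityMeasure (unif d) :=
  ⟨by simp [unif, Measure.pi_univ, Real.volume_Ico]⟩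

section Grid

variable {b m d : ℕ}

theorem cube_eq_pi (b m d : ℕ) (a : Fin d → ℕ) :
    cube b m d a = Set.univ.pi fun j => Set.Ico ((a j : ℝ) / b ^ m) ((a j + 1) / b ^ m) := by
  ext x
  simp [cube]

theorem mem_cube_iff_floor (hb : 0 < b) {a : Fin d → ℕ} {x : Fin d → ℝ} :
    x ∈ cube b m d a ↔ ∀ j, 0 ≤ x j ∧ ⌊x j * b ^ m⌋₊ = a j := by
  have hB : (0 : ℝ) < (b : ℝ) ^ m := by positivity
  refine forall_congr' fun j => ?_
  rw [div_le_iff₀ hB, lt_div_iff₀ hB]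
  constructor
  · rintro ⟨h₁, h₂⟩
    have hx : 0 ≤ x j := nonneg_of_mul_nonneg_left ((Nat.cast_nonneg _).trans h₁) hB
    exact ⟨hx, (Nat.floor_eq_iff (by positivity)).2 ⟨h₁, h₂⟩⟩
  · rintro ⟨hx, hfloor⟩
    exact (Nat.floor_eq_iff (by positivity)).1 hfloor

def gridCube (b m d : ℕ) (g : Fin d → Fin (b ^ m)) : Set (Fin d → ℝ) :=
  cube b m d fun j => g j

def gridFinset (b m d : ℕ) (C : Finset (Fin d → ℕ)) : Finset (Fin d → Fin (b ^ m)) :=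
  {g | (fun j => (g j : ℕ)) ∈ C}

theorem card_gridFinset {C : Finset (Fin d → ℕ)} (hC : ∀ a ∈ C, ∀ j, a j < b ^ m) :
    #(gridFinset b m d C) = #C := by
  refine card_bij (fun g _ j => g j) (fun g hg => (mem_filter.1 hg).2) ?_ ?_
  · exact fun g _ g' _ h => funext fun j => Fin.ext (congrFun h j)
  · exact fun a ha => ⟨fun j => ⟨a j, hC a ha j⟩, mem_filter.2 ⟨mem_univ _, ha⟩, rfl⟩

theorem gridFinset_union (C D : Finset (Fin d → ℕ)) :
    gridFinset b m d (C ∪ D) = gridFinset b m d C ∪ gridFinset b m d D := by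
  ext g
  simp [gridFinset]

theorem disjoint_gridFinset {C D : Finset (Fin d → ℕ)} (h : Disjoint C D) :
    Disjoint (gridFinset b m d C) (gridFinset b m d D) :=
  disjoint_filter.2 fun _ _ hC hD => disjoint_left.1 h hC hD

theorem occEvent_eq_occupied (N : ℕ) {C : Finset (Fin d → ℕ)}
    (hC : ∀ a ∈ C, ∀ j, a j < b ^ m) :
    occEvent b m d N C = occupied (gridCube b m d) N (gridFinset b m d C) := by
  ext ω
  simp only [occEvent, occupied, gridCube, gridFinset, mem_filter, mem_univ, true_and,
    Set.mem_ofPred_eq]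
  exact ⟨fun h g hg => h _ hg, fun h a ha => h (fun j => ⟨a j, hC a ha j⟩) ha⟩

theorem isEquipartition_gridCube (hb : 0 < b) :
    IsEquipartition (unif d) (gridCube b m d) (ENNReal.ofReal ((b : ℝ) ^ m)⁻¹ ^ d) where
  pairwise_disjoint g g' hne := Set.disjoint_left.2 fun x hx hx' => hne <| funext fun j =>
    Fin.ext <| ((mem_cube_iff_floor hb).1 hx j).2.symm.trans ((mem_cube_iff_floor hb).1 hx' j).2
  measurableSet g := by
    rw [gridCube, cube_eq_pi]
    exact MeasurableSet.univ_pi fun j => measurableSet_Ico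
  ae_exists_mem := by
    have hunit : ∀ᵐ x ∂unif d, ∀ j, x j ∈ Set.Ico (0 : ℝ) 1 :=
      ae_all_iff.2 fun j => Measure.tendsto_eval_ae_ae.eventually
        (p := (· ∈ Set.Ico (0 : ℝ) 1)) (ae_restrict_mem measurableSet_Ico)
    filter_upwards [hunit] with x hx
    have hlt : ∀ j, ⌊x j * b ^ m⌋₊ < b ^ m := fun j => by
      rw [Nat.floor_lt (mul_nonneg (hx j).1 (by positivity))]
      push_cast
      exact mul_lt_of_lt_one_left (by positivity) (hx j).2
    exact ⟨fun j => ⟨_, hlt j⟩, (mem_cube_iff_floor hb).2 fun j => ⟨(hx j).1, rfl⟩⟩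
  measure_eq g := by
    have hB : (0 : ℝ) < (b : ℝ) ^ m := by positivity
    have hside : ∀ j, volume.restrict (Set.Ico (0 : ℝ) 1)
        (Set.Ico ((g j : ℕ) / (b : ℝ) ^ m) (((g j : ℕ) + 1) / b ^ m)) =
          ENNReal.ofReal ((b : ℝ) ^ m)⁻¹ := fun j => by
      have hsub : Set.Ico ((g j : ℕ) / (b : ℝ) ^ m) (((g j : ℕ) + 1) / b ^ m) ⊆
          Set.Ico 0 1 := by
        refine Set.Ico_subset_Ico (by positivity) ((div_le_one hB).2 ?_)
        exact_mod_cast (g j).isLt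
      rw [Measure.restrict_apply measurableSet_Ico, Set.inter_eq_left.2 hsub, Real.volume_Ico]
      congr 1
      field_simp
      ring
    simp only [gridCube, cube_eq_pi, unif, Measure.pi_pi, hside, prod_const, card_univ,
      Fintype.card_fin]

end Grid

theorem stmt6_general (b m d N k : ℕ) (hb : 2 ≤ b) :
    -- `p_N` does not depend on which `k` distinct sub-cubes are chosen
    (∀ C D : Finset (Fin d → ℕ),
      (∀ a ∈ C, ∀ j, a j < b ^ m) → (∀ a ∈ D, ∀ j, a j < b ^ m) →
      C.card = D.card →
      sampleMeasure N d (occEvent b m d N C) = sampleMeasure N d (occEvent b m d N D)) ∧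
    -- `p_N(k)` is non-increasing in `k`
    (∀ C D : Finset (Fin d → ℕ),
      (∀ a ∈ D, ∀ j, a j < b ^ m) → C ⊆ D →
      sampleMeasure N d (occEvent b m d N D) ≤ sampleMeasure N d (occEvent b m d N C)) ∧
    -- `p_N(2k) ≤ (p_N(k))^2`
    (∀ C D : Finset (Fin d → ℕ),
      (∀ a ∈ C, ∀ j, a j < b ^ m) → (∀ a ∈ D, ∀ j, a j < b ^ m) →
      C.card = k → D.card = k → Disjoint C D →
      sampleMeasure N d (occEvent b m d N (C ∪ D)) ≤
        sampleMeasure N d (occEvent b m d N C) ^ 2) := by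
  have hP := isEquipartition_gridCube (m := m) (d := d) (by omega : 0 < b)
  have hcongr : ∀ C D : Finset (Fin d → ℕ), (∀ a ∈ C, ∀ j, a j < b ^ m) →
      (∀ a ∈ D, ∀ j, a j < b ^ m) → #C = #D →
      sampleMeasure N d (occEvent b m d N C) = sampleMeasure N d (occEvent b m d N D) :=
    fun C D hC hD hCD => by
      rw [occEvent_eq_occupied N hC, occEvent_eq_occupied N hD]
      exact hP.measure_occupied_congr N (by rw [card_gridFinset hC, card_gridFinset hD, hCD])
  refine ⟨hcongr, fun C D _ hCD => measure_mono fun ω hω a ha => hω a (hCD ha), ?_⟩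
  intro C D hC hD hCk hDk hCD
  have hCuD : ∀ a ∈ C ∪ D, ∀ j, a j < b ^ m := forall_mem_union.2 ⟨hC, hD⟩
  calc sampleMeasure N d (occEvent b m d N (C ∪ D))
      ≤ sampleMeasure N d (occEvent b m d N C) * sampleMeasure N d (occEvent b m d N D) := by
        rw [occEvent_eq_occupied N hCuD, gridFinset_union, occEvent_eq_occupied N hC,
          occEvent_eq_occupied N hD]
        exact hP.measure_occupied_union_le N (disjoint_gridFinset hCD)
    _ = sampleMeasure N d (occEvent b m d N C) ^ 2 := by
        rw [hcongr D C hD hC (hDk.trans hCk.symm), sq]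

theorem stmt6 (b m d N k : ℕ) (hb : 2 ≤ b) (hd : 1 ≤ d) (hm : 1 ≤ m) (hN : 1 ≤ N)
    (hk : 2 * k ≤ b ^ (m * d)) :
    -- `p_N` does not depend on which `k` distinct sub-cubes are chosen
    (∀ C D : Finset (Fin d → ℕ),
      (∀ a ∈ C, ∀ j, a j < b ^ m) → (∀ a ∈ D, ∀ j, a j < b ^ m) →
      C.card = D.card →
      sampleMeasure N d (occEvent b m d N C) = sampleMeasure N d (occEvent b m d N D)) ∧
    -- `p_N(k)` is non-increasing in `k`
    (∀ C D : Finset (Fin d → ℕ),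
      (∀ a ∈ D, ∀ j, a j < b ^ m) → C ⊆ D →
      sampleMeasure N d (occEvent b m d N D) ≤ sampleMeasure N d (occEvent b m d N C)) ∧
    -- `p_N(2k) ≤ (p_N(k))^2`
    (∀ C D : Finset (Fin d → ℕ),
      (∀ a ∈ C, ∀ j, a j < b ^ m) → (∀ a ∈ D, ∀ j, a j < b ^ m) →
      C.card = k → D.card = k → Disjoint C D →
      sampleMeasure N d (occEvent b m d N (C ∪ D)) ≤
        sampleMeasure N d (occEvent b m d N C) ^ 2) :=
  stmt6_general b m d N k hb
end

section
/- Under the regularity assumption that each of the b^{md} sub-cubes lies in exactly A/b^{m(d-1)} of the A patterns, the number N_0 of unordered pairs of disjoint patterns satisfies N_0 ≥ C(A,2) − Q = (A^2/2)(1 − b^{-m(d-2)}) + (A/2)(b^m − 1). -/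
open Finset

theorem stmt11 (b m d A M : ℕ) (hb : 2 ≤ b) (hd : 2 ≤ d) (hm : 1 ≤ m)
    (F : Finset (Finset (Fin (b ^ (m * d)))))
    (hA : F.card = A)
    (hsize : ∀ P ∈ F, P.card = b ^ m)
    (hreg : ∀ x : Fin (b ^ (m * d)), (F.filter fun P => x ∈ P).card = M)
    (hM : M * b ^ (m * (d - 1)) = A) :
    -- `N_0`, the number of unordered pairs of disjoint patterns, satisfies
    ((F.offDiag.filter fun p => Disjoint p.1 p.2).card : ℚ) / 2 ≥
      (A : ℚ) ^ 2 / 2 * (1 - 1 / (b : ℚ) ^ (m * (d - 2))) +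
        (A : ℚ) / 2 * ((b : ℚ) ^ m - 1) := by
  classical
  have hcard : ∀ P P' : Finset (Fin (b ^ (m * d))),
      (P ∩ P').card =
        ∑ x : Fin (b ^ (m * d)), (if x ∈ P then 1 else 0) * (if x ∈ P' then 1 else 0) := by
    intro P P'
    have h0 : (P ∩ P') = Finset.univ.filter (fun x => x ∈ P ∧ x ∈ P') := by
      ext x; simp
    rw [h0, Finset.card_filter]
    refine Finset.sum_congr rfl fun x _ => ?_
    by_cases h1 : x ∈ P <;> by_cases h2 : x ∈ P' <;> simp [h1, h2]
  have key : ∑ P ∈ F, ∑ P' ∈ F, (P ∩ P').card = b ^ (m * d) * (M * M) := by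
    calc ∑ P ∈ F, ∑ P' ∈ F, (P ∩ P').card
        = ∑ P ∈ F, ∑ P' ∈ F, ∑ x : Fin (b ^ (m * d)),
            (if x ∈ P then 1 else 0) * (if x ∈ P' then 1 else 0) := by
          simp_rw [hcard]
      _ = ∑ P ∈ F, ∑ x : Fin (b ^ (m * d)), ∑ P' ∈ F,
            (if x ∈ P then 1 else 0) * (if x ∈ P' then 1 else 0) :=
          Finset.sum_congr rfl fun P _ => Finset.sum_comm
      _ = ∑ x : Fin (b ^ (m * d)), ∑ P ∈ F, ∑ P' ∈ F,
            (if x ∈ P then 1 else 0) * (if x ∈ P' then 1 else 0) :=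
          Finset.sum_comm
      _ = ∑ x : Fin (b ^ (m * d)),
            (∑ P ∈ F, if x ∈ P then 1 else 0) * (∑ P' ∈ F, if x ∈ P' then 1 else 0) := by
          refine Finset.sum_congr rfl fun x _ => ?_
          rw [Finset.sum_mul_sum]
      _ = ∑ x : Fin (b ^ (m * d)), M * M := by
          refine Finset.sum_congr rfl fun x _ => ?_
          have h1 : (∑ P ∈ F, if x ∈ P then 1 else 0) = M := by
            rw [← hreg x, Finset.card_filter]
          rw [h1]
      _ = b ^ (m * d) * (M * M) := by simp [Finset.card_univ, mul_comm]
  set S := F.offDiag.filter fun p => Disjoint p.1 p.2 with hSdef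
  set N := F.offDiag.filter fun p => ¬ Disjoint p.1 p.2 with hNdef
  have hsplit : S.card + N.card = A * A - A := by
    rw [hSdef, hNdef, Finset.card_filter_add_card_filter_not, Finset.offDiag_card, hA]
  have hAA : A ≤ A * A := by nlinarith
  -- sum over product splits into diag + offDiag
  have hdiag : ∑ p ∈ F.diag, ((p.1 ∩ p.2).card) = A * b ^ m := by
    rw [Finset.sum_diag]
    calc ∑ P ∈ F, (P ∩ P).card = ∑ P ∈ F, b ^ m := by
          refine Finset.sum_congr rfl fun P hP => ?_
          rw [Finset.inter_self, hsize P hP]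
      _ = A * b ^ m := by rw [Finset.sum_const, hA, smul_eq_mul]
  have hprod : ∑ p ∈ F ×ˢ F, ((p.1 ∩ p.2).card) = b ^ (m * d) * (M * M) := by
    rw [Finset.sum_product]; exact key
  have hsum_split : ∑ p ∈ F.diag, ((p.1 ∩ p.2).card) + ∑ p ∈ F.offDiag, ((p.1 ∩ p.2).card)
      = b ^ (m * d) * (M * M) := by
    rw [← hprod, ← Finset.sum_union (Finset.disjoint_diag_offDiag F), Finset.diag_union_offDiag]
  -- N.card ≤ sum over offDiag
  have hNle : N.card ≤ ∑ p ∈ F.offDiag, ((p.1 ∩ p.2).card) := by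
    calc N.card = ∑ p ∈ N, 1 := by simp
      _ ≤ ∑ p ∈ N, ((p.1 ∩ p.2).card) := by
          refine Finset.sum_le_sum fun p hp => ?_
          rw [hNdef, Finset.mem_filter] at hp
          have := Finset.not_disjoint_iff_nonempty_inter.mp hp.2
          exact Finset.card_pos.mpr this
      _ ≤ ∑ p ∈ F.offDiag, ((p.1 ∩ p.2).card) := by
          refine Finset.sum_le_sum_of_subset (Finset.filter_subset _ _)
  -- key nat identity: b^(m*d) * (M*M) = b^m * A * M
  have hpow : b ^ (m * d) * (M * M) = b ^ m * A * M := by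
    have h1 : m * d = m * (d - 1) + m := by
      rw [← Nat.mul_succ]; congr 1; omega
    rw [h1, pow_add, ← hM]; ring
  -- cast everything to ℚ
  have hNleQ : (N.card : ℚ) + A * b ^ m ≤ b ^ m * A * M := by
    have h3 : N.card + A * b ^ m ≤ b ^ m * A * M := by
      rw [← hpow, ← hsum_split, hdiag]
      calc N.card + A * b ^ m ≤ (∑ p ∈ F.offDiag, ((p.1 ∩ p.2).card)) + A * b ^ m :=
            Nat.add_le_add_right hNle _
        _ = A * b ^ m + ∑ p ∈ F.offDiag, ((p.1 ∩ p.2).card) := Nat.add_comm _ _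
    exact_mod_cast h3
  have hsplitQ : (S.card : ℚ) + N.card + A = A * A := by
    have h5 : S.card + N.card + A = A * A := by rw [hsplit, Nat.sub_add_cancel hAA]
    exact_mod_cast h5
  have hbne : ((b : ℚ)) ^ (m * (d - 2)) ≠ 0 := by positivity
  have hAQ : (A : ℚ) = M * (b : ℚ) ^ (m * (d - 2)) * (b : ℚ) ^ m := by
    have h2 : m * (d - 1) = m * (d - 2) + m := by
      rw [← Nat.mul_succ]; congr 1; omega
    have := congrArg (Nat.cast : ℕ → ℚ) hM
    push_cast at this
    rw [← this, h2, pow_add]; ring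
  have hrhs : (A : ℚ) ^ 2 / 2 * (1 - 1 / (b : ℚ) ^ (m * (d - 2))) +
        (A : ℚ) / 2 * ((b : ℚ) ^ m - 1)
      = ((A : ℚ) * A + A * b ^ m - b ^ m * A * M - A) / 2 := by
    have hx : (A : ℚ) ^ 2 * (1 / (b : ℚ) ^ (m * (d - 2))) = (b : ℚ) ^ m * A * M := by
      rw [hAQ]; field_simp
    linear_combination (-1 / 2 : ℚ) * hx
  rw [ge_iff_le, hrhs]
  linarith
end
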